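/- arXiv:2102.00584 — 6 statements merged into one kernel-verified Lean document; each statement's English description precedes it below -/
import Mathlib

section
/- Let Q_y ⊂ ℝⁿ be a nonempty compact convex set, let g : ℝⁿ → ℝ be differentiable, L-smooth and μ-strongly convex on Q_y (with L, μ > 0), let y* be the minimizer of g over Q_y, let D = max_{y,z ∈ Q_y} ‖y − z‖₂, and suppose ỹ ∈ Q_y satisfies g(ỹ) − g(y*) ≤ ε for some ε ≥ 0. Then max_{y ∈ Q_y} ⟨∇g(ỹ), ỹ − y⟩ ≤ (L·D + ‖∇g(y*)‖₂)·√(2ε/μ). -/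
open scoped RealInnerProductSpace

/-- if `ỹ` is an `ε`-approximate minimizer of an `L`-smooth, `μ`-strongly convex
function `g` over a nonempty compact convex set `Q`, then
`max_{y ∈ Q} ⟨∇g(ỹ), ỹ − y⟩ ≤ (L·D + ‖∇g(y*)‖)·√(2ε/μ)`, where `D` is the diameter of `Q`. -/
theorem min_min_statement_0 {n : ℕ} (Q : Set (EuclideanSpace ℝ (Fin n)))
    (hQne : Q.Nonempty) (hQcomp : IsCompact Q) (hQconv : Convex ℝ Q)
    (g : EuclideanSpace ℝ (Fin n) → ℝ)
    (g' : EuclideanSpace ℝ (Fin n) → EuclideanSpace ℝ (Fin n))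
    (hdiff : ∀ y, HasGradientAt g (g' y) y)
    (L μ : ℝ) (hL : 0 < L) (hμ : 0 < μ)
    (hsmooth : ∀ y ∈ Q, ∀ z ∈ Q, ‖g' y - g' z‖ ≤ L * ‖y - z‖)
    (hsc : ∀ y ∈ Q, ∀ z ∈ Q, g z ≥ g y + ⟪g' y, z - y⟫ + μ / 2 * ‖z - y‖ ^ 2)
    (ystar : EuclideanSpace ℝ (Fin n)) (hystar : ystar ∈ Q)
    (hmin : ∀ y ∈ Q, g ystar ≤ g y)
    (D : ℝ)
    (hD : IsGreatest
      ((fun p : EuclideanSpace ℝ (Fin n) × EuclideanSpace ℝ (Fin n) => ‖p.1 - p.2‖) '' (Q ×ˢ Q)) D)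
    (ε : ℝ) (hε : 0 ≤ ε)
    (ytil : EuclideanSpace ℝ (Fin n)) (hytil : ytil ∈ Q)
    (happrox : g ytil - g ystar ≤ ε) :
    ∀ y ∈ Q, ⟪g' ytil, ytil - y⟫ ≤ (L * D + ‖g' ystar‖) * Real.sqrt (2 * ε / μ) := by
  -- First-order optimality at ystar
  have opt : ∀ y ∈ Q, 0 ≤ ⟪g' ystar, y - ystar⟫ := by
    intro y hy
    set v := y - ystar with hv
    have key : ∀ t : ℝ, t ∈ Set.Ioc (0:ℝ) 1 → -(L * ‖v‖ ^ 2) * t ≤ ⟪g' ystar, v⟫ := by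
      intro t ht
      set yt := ystar + t • v with hyt
      have hytQ : yt ∈ Q := hQconv.add_smul_sub_mem hystar hy ⟨le_of_lt ht.1, ht.2⟩
      have h1 := hsc yt hytQ ystar hystar
      have h2 := hmin yt hytQ
      have hst : ystar - yt = -(t • v) := by
        rw [hyt]; abel
      have hinner : ⟪g' yt, ystar - yt⟫ = -(t * ⟪g' yt, v⟫) := by
        rw [hst, inner_neg_right, real_inner_smul_right]
      have hnn : (0:ℝ) ≤ μ / 2 * ‖ystar - yt‖ ^ 2 := by positivity
      have h3 : 0 ≤ ⟪g' yt, v⟫ := by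
        nlinarith [ht.1]
      have hlip : ‖g' ystar - g' yt‖ ≤ L * (t * ‖v‖) := by
        have := hsmooth ystar hystar yt hytQ
        have hn : ‖ystar - yt‖ = t * ‖v‖ := by
          rw [hst, norm_neg, norm_smul, Real.norm_eq_abs, abs_of_pos ht.1]
        rwa [hn] at this
      have hdecomp : ⟪g' ystar, v⟫ = ⟪g' yt, v⟫ + ⟪g' ystar - g' yt, v⟫ := by
        rw [inner_sub_left]; ring
      have hcs : ⟪g' ystar - g' yt, v⟫ ≥ -(‖g' ystar - g' yt‖ * ‖v‖) := by
        have := abs_real_inner_le_norm (g' ystar - g' yt) v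
        have := neg_abs_le ⟪g' ystar - g' yt, v⟫
        linarith [abs_real_inner_le_norm (g' ystar - g' yt) v,
          neg_abs_le ⟪g' ystar - g' yt, v⟫]
      have hvnn : (0:ℝ) ≤ ‖v‖ := norm_nonneg _
      nlinarith [mul_le_mul_of_nonneg_right hlip hvnn]
    have hten : Filter.Tendsto (fun t : ℝ => -(L * ‖v‖ ^ 2) * t) (nhdsWithin 0 (Set.Ioi 0))
        (nhds 0) := by
      have hc : Continuous (fun t : ℝ => -(L * ‖v‖ ^ 2) * t) := by continuity
      have h := (hc.tendsto (0:ℝ)).mono_left (nhdsWithin_le_nhds (s := Set.Ioi (0:ℝ)))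
      simpa using h
    refine le_of_tendsto hten ?_
    filter_upwards [Ioc_mem_nhdsGT_of_mem (by norm_num : (0:ℝ) ∈ Set.Ico (0:ℝ) 1)] with t ht
    exact key t ht
  intro y hy
  set s := Real.sqrt (2 * ε / μ) with hs
  have hs0 : 0 ≤ s := Real.sqrt_nonneg _
  -- bound on ‖ytil - ystar‖
  have hdist : ‖ytil - ystar‖ ≤ s := by
    have h1 := hsc ystar hystar ytil hytil
    have h2 := opt ytil hytil
    have hsq : ‖ytil - ystar‖ ^ 2 ≤ 2 * ε / μ := by
      rw [le_div_iff₀ hμ]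
      nlinarith
    calc ‖ytil - ystar‖ = Real.sqrt (‖ytil - ystar‖ ^ 2) := by
          rw [Real.sqrt_sq (norm_nonneg _)]
      _ ≤ s := Real.sqrt_le_sqrt hsq
  have hDy : ‖ytil - y‖ ≤ D := hD.2 ⟨(ytil, y), ⟨hytil, hy⟩, rfl⟩
  have hD0 : 0 ≤ D := le_trans (norm_nonneg _) hDy
  have hdecomp : ⟪g' ytil, ytil - y⟫ =
      ⟪g' ytil - g' ystar, ytil - y⟫ + ⟪g' ystar, ytil - ystar⟫ + ⟪g' ystar, ystar - y⟫ := by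
    have h2 : ⟪g' ystar, ytil - ystar⟫ + ⟪g' ystar, ystar - y⟫ = ⟪g' ystar, ytil - y⟫ := by
      rw [← inner_add_right]
      congr 1
      abel
    rw [inner_sub_left, ← h2]
    ring
  have hA : ⟪g' ytil - g' ystar, ytil - y⟫ ≤ L * s * D := by
    calc ⟪g' ytil - g' ystar, ytil - y⟫ ≤ ‖g' ytil - g' ystar‖ * ‖ytil - y‖ :=
          real_inner_le_norm _ _
      _ ≤ (L * s) * D := by
          apply mul_le_mul _ hDy (norm_nonneg _) (by positivity)
          calc ‖g' ytil - g' ystar‖ ≤ L * ‖ytil - ystar‖ := hsmooth ytil hytil ystar hystar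
            _ ≤ L * s := by nlinarith
  have hB : ⟪g' ystar, ytil - ystar⟫ ≤ ‖g' ystar‖ * s := by
    calc ⟪g' ystar, ytil - ystar⟫ ≤ ‖g' ystar‖ * ‖ytil - ystar‖ := real_inner_le_norm _ _
      _ ≤ ‖g' ystar‖ * s := by nlinarith [norm_nonneg (g' ystar)]
  have hC : ⟪g' ystar, ystar - y⟫ ≤ 0 := by
    have := opt y hy
    have hneg : ystar - y = -(y - ystar) := by abel
    rw [hneg, inner_neg_right]
    linarith
  rw [hdecomp]
  nlinarith
end

section
/- Let Q_y ⊂ ℝⁿ be a nonempty compact convex set, let g : ℝⁿ → ℝ be differentiable, L-smooth and μ-strongly convex on Q_y (with L, μ > 0), let y* be the minimizer of g over Q_y, and suppose ỹ ∈ Q_y satisfies g(ỹ) − g(y*) ≤ ε for some ε ≥ 0. Then for every y ∈ Q_y, ⟨∇g(ỹ), ỹ − y⟩ ≤ (L·‖ỹ − y‖₂ + ‖∇g(y*)‖₂)·√(2ε/μ). -/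
open scoped RealInnerProductSpace

/-- if `ỹ` is an `ε`-approximate minimizer of an `L`-smooth, `μ`-strongly convex
function `g` over a nonempty compact convex set `Q`, then for every `y ∈ Q`,
`⟨∇g(ỹ), ỹ − y⟩ ≤ (L·‖ỹ − y‖ + ‖∇g(y*)‖)·√(2ε/μ)`. -/
theorem min_min_statement_1 {n : ℕ} (Q : Set (EuclideanSpace ℝ (Fin n)))
    (hQne : Q.Nonempty) (hQcomp : IsCompact Q) (hQconv : Convex ℝ Q)
    (g : EuclideanSpace ℝ (Fin n) → ℝ)
    (g' : EuclideanSpace ℝ (Fin n) → EuclideanSpace ℝ (Fin n))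
    (hdiff : ∀ y, HasGradientAt g (g' y) y)
    (L μ : ℝ) (hL : 0 < L) (hμ : 0 < μ)
    (hsmooth : ∀ y ∈ Q, ∀ z ∈ Q, ‖g' y - g' z‖ ≤ L * ‖y - z‖)
    (hsc : ∀ y ∈ Q, ∀ z ∈ Q, g z ≥ g y + ⟪g' y, z - y⟫ + μ / 2 * ‖z - y‖ ^ 2)
    (ystar : EuclideanSpace ℝ (Fin n)) (hystar : ystar ∈ Q)
    (hmin : ∀ y ∈ Q, g ystar ≤ g y)
    (ε : ℝ) (hε : 0 ≤ ε)
    (ytil : EuclideanSpace ℝ (Fin n)) (hytil : ytil ∈ Q)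
    (happrox : g ytil - g ystar ≤ ε) :
    ∀ y ∈ Q, ⟪g' ytil, ytil - y⟫ ≤ (L * ‖ytil - y‖ + ‖g' ystar‖) * Real.sqrt (2 * ε / μ) := by
  -- first-order optimality: ⟪g' ystar, z - ystar⟫ ≥ 0 for z ∈ Q
  have hfo : ∀ z ∈ Q, 0 ≤ ⟪g' ystar, z - ystar⟫ := by
    intro z hz
    have hminOn : IsLocalMinOn g Q ystar := (isMinOn_iff.2 hmin).localize
    have hcone : z - ystar ∈ posTangentConeAt Q ystar :=
      sub_mem_posTangentConeAt_of_segment_subset (hQconv.segment_subset hystar hz)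
    have hfd : HasFDerivWithinAt g
        ((InnerProductSpace.toDual ℝ _) (g' ystar)) Q ystar :=
      ((hdiff ystar).hasFDerivAt).hasFDerivWithinAt
    have := hminOn.hasFDerivWithinAt_nonneg hfd hcone
    simpa [InnerProductSpace.toDual_apply_apply] using this
  -- ‖ytil - ystar‖ ≤ √(2ε/μ)
  have hd2 : ‖ytil - ystar‖ ^ 2 ≤ 2 * ε / μ := by
    have h1 := hsc ystar hystar ytil hytil
    have h2 := hfo ytil hytil
    have h3 : μ / 2 * ‖ytil - ystar‖ ^ 2 ≤ ε := by linarith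
    calc ‖ytil - ystar‖ ^ 2 = (μ / 2 * ‖ytil - ystar‖ ^ 2) * (2 / μ) := by
          field_simp
      _ ≤ ε * (2 / μ) := by
          apply mul_le_mul_of_nonneg_right h3; positivity
      _ = 2 * ε / μ := by ring
  have hdle : ‖ytil - ystar‖ ≤ Real.sqrt (2 * ε / μ) := by
    have := Real.sqrt_le_sqrt hd2
    rwa [Real.sqrt_sq (norm_nonneg _)] at this
  intro y hy
  have key : ⟪g' ytil, ytil - y⟫ ≤ (L * ‖ytil - y‖ + ‖g' ystar‖) * ‖ytil - ystar‖ := by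
    have hsplit : ⟪g' ytil, ytil - y⟫ =
        ⟪g' ytil - g' ystar, ytil - y⟫ + ⟪g' ystar, ytil - ystar⟫
          - ⟪g' ystar, y - ystar⟫ := by
      simp [inner_sub_left, inner_sub_right]; ring
    have h1 : ⟪g' ytil - g' ystar, ytil - y⟫ ≤ L * ‖ytil - ystar‖ * ‖ytil - y‖ := by
      calc ⟪g' ytil - g' ystar, ytil - y⟫ ≤ ‖g' ytil - g' ystar‖ * ‖ytil - y‖ :=
            real_inner_le_norm _ _
        _ ≤ (L * ‖ytil - ystar‖) * ‖ytil - y‖ :=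
            mul_le_mul_of_nonneg_right (hsmooth ytil hytil ystar hystar) (norm_nonneg _)
    have h2 : ⟪g' ystar, ytil - ystar⟫ ≤ ‖g' ystar‖ * ‖ytil - ystar‖ :=
      real_inner_le_norm _ _
    have h3 := hfo y hy
    rw [hsplit]; nlinarith
  calc ⟪g' ytil, ytil - y⟫ ≤ (L * ‖ytil - y‖ + ‖g' ystar‖) * ‖ytil - ystar‖ := key
    _ ≤ (L * ‖ytil - y‖ + ‖g' ystar‖) * Real.sqrt (2 * ε / μ) := by
        apply mul_le_mul_of_nonneg_left hdle; positivity
end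

section
/- Let Q_x ⊂ ℝ^d and Q_y ⊂ ℝⁿ be nonempty compact convex sets, and let F : Q_x × Q_y → ℝ be convex jointly in (x,y), differentiable in y, and, for each fixed x ∈ Q_x, L-smooth and μ-strongly convex in y on Q_y (with L, μ > 0). Define f(x) = min_{y ∈ Q_y} F(x, y), let y(x) denote the minimizer of F(x, ·) over Q_y, and let D = max_{y,z ∈ Q_y} ‖y − z‖₂. Fix x ∈ Q_x and ε ≥ 0, and suppose ỹ ∈ Q_y satisfies F(x, ỹ) − f(x) ≤ ε. If g_x ∈ ℝ^d is such that (g_x, ∇_y F(x, ỹ)) is a joint subgradient of F at (x, ỹ), i.e. F(x', y') ≥ F(x, ỹ) + ⟨g_x, x' − x⟩ + ⟨∇_y F(x, ỹ), y' − ỹ⟩ for all (x', y') ∈ Q_x × Q_y, then g_x is a δ-subgradient of f at x with δ = (L·D + ‖∇_y F(x, y(x))‖₂)·√(2ε/μ). -/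
open scoped RealInnerProductSpace

/-- if `ỹ` solves the inner problem `min_{y ∈ Q_y} F(x, y)` up to accuracy `ε` for a
function `F` that is jointly convex and `L`-smooth, `μ`-strongly convex in `y`, and
`(g_x, ∇_y F(x, ỹ))` is a joint subgradient of `F` at `(x, ỹ)`, then `g_x` is a `δ`-subgradient
of `f(x) = min_{y ∈ Q_y} F(x, y)` at `x` with `δ = (L·D + ‖∇_y F(x, y(x))‖)·√(2ε/μ)`. -/
theorem min_min_statement_6 {d n : ℕ}
    (Qx : Set (EuclideanSpace ℝ (Fin d))) (Qy : Set (EuclideanSpace ℝ (Fin n)))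
    (hQxne : Qx.Nonempty) (hQxc : IsCompact Qx) (hQxconv : Convex ℝ Qx)
    (hQyne : Qy.Nonempty) (hQyc : IsCompact Qy) (hQyconv : Convex ℝ Qy)
    (F : EuclideanSpace ℝ (Fin d) → EuclideanSpace ℝ (Fin n) → ℝ)
    (hFconv : ConvexOn ℝ (Qx ×ˢ Qy)
      (fun p : EuclideanSpace ℝ (Fin d) × EuclideanSpace ℝ (Fin n) => F p.1 p.2))
    (Fy' : EuclideanSpace ℝ (Fin d) → EuclideanSpace ℝ (Fin n) → EuclideanSpace ℝ (Fin n))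
    (hFdiff : ∀ x ∈ Qx, ∀ y : EuclideanSpace ℝ (Fin n), HasGradientAt (fun y => F x y) (Fy' x y) y)
    (L μ : ℝ) (hL : 0 < L) (hμ : 0 < μ)
    (hsmooth : ∀ x ∈ Qx, ∀ y ∈ Qy, ∀ y' ∈ Qy, ‖Fy' x y - Fy' x y'‖ ≤ L * ‖y - y'‖)
    (hsc : ∀ x ∈ Qx, ∀ y ∈ Qy, ∀ z ∈ Qy,
      F x z ≥ F x y + ⟪Fy' x y, z - y⟫ + μ / 2 * ‖z - y‖ ^ 2)
    (f : EuclideanSpace ℝ (Fin d) → ℝ)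
    (hf : ∀ x ∈ Qx, IsLeast ((fun y => F x y) '' Qy) (f x))
    (D : ℝ)
    (hD : IsGreatest
      ((fun p : EuclideanSpace ℝ (Fin n) × EuclideanSpace ℝ (Fin n) => ‖p.1 - p.2‖)
        '' (Qy ×ˢ Qy)) D)
    (x : EuclideanSpace ℝ (Fin d)) (hx : x ∈ Qx)
    (yx : EuclideanSpace ℝ (Fin n)) (hyxQ : yx ∈ Qy) (hyxmin : ∀ y ∈ Qy, F x yx ≤ F x y)
    (ε : ℝ) (hε : 0 ≤ ε)
    (ytil : EuclideanSpace ℝ (Fin n)) (hytil : ytil ∈ Qy)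
    (happrox : F x ytil - f x ≤ ε)
    (gx : EuclideanSpace ℝ (Fin d))
    (hsub : ∀ x' ∈ Qx, ∀ y' ∈ Qy,
      F x' y' ≥ F x ytil + ⟪gx, x' - x⟫ + ⟪Fy' x ytil, y' - ytil⟫) :
    ∀ x' ∈ Qx,
      f x' ≥ f x + ⟪gx, x' - x⟫ - (L * D + ‖Fy' x yx‖) * Real.sqrt (2 * ε / μ) := by
  intro x' hx'
  -- notation
  set r : ℝ := Real.sqrt (2 * ε / μ) with hr
  have hrnn : 0 ≤ r := Real.sqrt_nonneg _
  -- f x = F x yx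
  have hfx : f x = F x yx := by
    have h1 := (hf x hx).2 ⟨yx, hyxQ, rfl⟩
    have h2 : ∀ z ∈ (fun y => F x y) '' Qy, F x yx ≤ z := by
      rintro z ⟨y, hy, rfl⟩; exact hyxmin y hy
    exact le_antisymm h1 (h2 _ (hf x hx).1)
  -- variational inequality: for any y' ∈ Qy, 0 ≤ ⟪Fy' x yx, y' - yx⟫
  have hVI : ∀ y' ∈ Qy, 0 ≤ ⟪Fy' x yx, y' - yx⟫ := by
    intro y' hy'
    have hmin : IsLocalMinOn (fun y => F x y) Qy yx := by
      refine IsMinFilter.filter_mono ?_ (Filter.le_principal_iff.mpr self_mem_nhdsWithin)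
      exact fun y hy => hyxmin y hy
    have hfd : HasFDerivWithinAt (fun y => F x y)
        ((InnerProductSpace.toDual ℝ (EuclideanSpace ℝ (Fin n))) (Fy' x yx)) Qy yx :=
      ((hFdiff x hx yx).hasFDerivAt).hasFDerivWithinAt
    have hcone : y' - yx ∈ posTangentConeAt Qy yx :=
      sub_mem_posTangentConeAt_of_segment_subset (hQyconv.segment_subset hyxQ hy')
    have := hmin.hasFDerivWithinAt_nonneg hfd hcone
    simpa [InnerProductSpace.toDual_apply_apply] using this
  -- distance bound: ‖ytil - yx‖ ≤ r
  have hdist : ‖ytil - yx‖ ≤ r := by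
    have hsc' := hsc x hx yx hyxQ ytil hytil
    have hVI' := hVI ytil hytil
    have h1 : μ / 2 * ‖ytil - yx‖ ^ 2 ≤ ε := by
      have : F x yx + μ / 2 * ‖ytil - yx‖ ^ 2 ≤ F x ytil := by nlinarith
      nlinarith [hfx ▸ happrox]
    have h2 : ‖ytil - yx‖ ^ 2 ≤ 2 * ε / μ := by
      rw [le_div_iff₀ hμ]; nlinarith
    calc ‖ytil - yx‖ = Real.sqrt (‖ytil - yx‖ ^ 2) := by
          rw [Real.sqrt_sq (norm_nonneg _)]
      _ ≤ r := Real.sqrt_le_sqrt h2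
  -- pick y' with f x' = F x' y'
  obtain ⟨y', hy'Q, hy'eq⟩ := (hf x' hx').1
  have hD' : ∀ a ∈ Qy, ∀ b ∈ Qy, ‖a - b‖ ≤ D := fun a ha b hb =>
    hD.2 ⟨(a, b), ⟨ha, hb⟩, rfl⟩
  -- key bound on the y-term
  have hkey : ⟪Fy' x ytil, y' - ytil⟫ ≥ -((L * D + ‖Fy' x yx‖) * r) := by
    have hsplit : ⟪Fy' x ytil, y' - ytil⟫
        = ⟪Fy' x ytil - Fy' x yx, y' - ytil⟫ + ⟪Fy' x yx, y' - yx⟫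
          + ⟪Fy' x yx, yx - ytil⟫ := by
      rw [inner_sub_left]
      rw [show (y' - yx : EuclideanSpace ℝ (Fin n)) = (y' - ytil) + (ytil - yx) by abel,
        inner_add_right]
      have : ⟪Fy' x yx, yx - ytil⟫ = -⟪Fy' x yx, ytil - yx⟫ := by
        rw [← inner_neg_right]; congr 1; abel
      rw [this]; ring
    have hn2 : ‖y' - ytil‖ ≤ D := hD' y' hy'Q ytil hytil
    have hDnn : 0 ≤ D := le_trans (norm_nonneg _) hn2
    have h1 : ⟪Fy' x ytil - Fy' x yx, y' - ytil⟫ ≥ -(L * D * r) := by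
      have habs := abs_real_inner_le_norm (Fy' x ytil - Fy' x yx) (y' - ytil)
      have hn1 : ‖Fy' x ytil - Fy' x yx‖ ≤ L * r := by
        calc ‖Fy' x ytil - Fy' x yx‖ ≤ L * ‖ytil - yx‖ := hsmooth x hx ytil hytil yx hyxQ
          _ ≤ L * r := by nlinarith
      have hbound : ‖Fy' x ytil - Fy' x yx‖ * ‖y' - ytil‖ ≤ L * r * D :=
        mul_le_mul hn1 hn2 (norm_nonneg _) (mul_nonneg hL.le hrnn)
      have habs2 := abs_le.mp (habs.trans hbound)
      nlinarith [habs2.1]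
    have h2 : 0 ≤ ⟪Fy' x yx, y' - yx⟫ := hVI y' hy'Q
    have h3 : ⟪Fy' x yx, yx - ytil⟫ ≥ -(‖Fy' x yx‖ * r) := by
      have habs := abs_real_inner_le_norm (Fy' x yx) (yx - ytil)
      have hn : ‖yx - ytil‖ ≤ r := by rwa [norm_sub_rev]
      have hbound : ‖Fy' x yx‖ * ‖yx - ytil‖ ≤ ‖Fy' x yx‖ * r :=
        mul_le_mul_of_nonneg_left hn (norm_nonneg _)
      have habs2 := abs_le.mp (habs.trans hbound)
      linarith [habs2.1]
    nlinarith
  -- conclude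
  have hmain := hsub x' hx' y' hy'Q
  have hFxytil : f x ≤ F x ytil := (hf x hx).2 ⟨ytil, hytil, rfl⟩
  calc f x' = F x' y' := hy'eq.symm
    _ ≥ F x ytil + ⟪gx, x' - x⟫ + ⟪Fy' x ytil, y' - ytil⟫ := hmain
    _ ≥ f x + ⟪gx, x' - x⟫ - (L * D + ‖Fy' x yx‖) * r := by nlinarith
end

section
/- Let Q_y ⊂ ℝⁿ be a nonempty compact convex set and f : ℝⁿ → ℝ a differentiable convex function that is L-smooth on Q_y (L > 0). Let y* be a minimizer of f over Q_y and fix N ≥ 1. Suppose the sequences (y^k), (z^k), (u^k) in Q_y and (α_k), (A_k) in ℝ are produced by the fast gradient method: y⁰ = z⁰ = u⁰ ∈ Q_y, α₀ = A₀ = 0, and for k = 0, …, N−1: α_{k+1} is the largest root of A_k + α = L·α² (i.e. α_{k+1} = (1 + √(1 + 4·L·A_k))/(2L)), A_{k+1} = A_k + α_{k+1}, z^{k+1} = (α_{k+1}·u^k + A_k·y^k)/A_{k+1}, u^{k+1} = argmin_{y ∈ Q_y} { α_{k+1}·⟨∇f(z^{k+1}), y − z^{k+1}⟩ + (1/2)‖y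 − u^k‖₂² }, and y^{k+1} = (α_{k+1}·u^{k+1} + A_k·y^k)/A_{k+1}. Then f(y^N) − f(y*) ≤ 8·L·R²/(N+1)², where R² = (1/2)‖y⁰ − y*‖₂². -/
/-!
The potential `A_k (f(y^k) - f(y*)) + ½‖y* - u^k‖²` does not increase along the method. Since
`y^{k+1} - z^{k+1} = (α_{k+1} / A_{k+1}) (u^{k+1} - u^k)` and `L α_{k+1}² = A_{k+1}`, the descent
lemma at `z^{k+1}` bounds `A_{k+1} f(y^{k+1})` by a linear term plus `½‖u^{k+1} - u^k‖²`; the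
three-point property of the prox step and the gradient inequality of `f` at `z^{k+1}` (towards
`y^k` and `y*`) absorb both. Hence `A_N (f(y^N) - f(y*)) ≤ R²`, while `√(1 + 4 L A_k)` grows by
at least one per step, so that `8 L A_N ≥ (N + 1)²`.
-/

open scoped RealInnerProductSpace
open Set AffineMap

section Calculus

variable {E : Type*} [NormedAddCommGroup E] [InnerProductSpace ℝ E] [CompleteSpace E]
  {f : E → ℝ} {g a b : E}

theorem HasGradientAt.hasDerivAt_comp_lineMap {t : ℝ} (h : HasGradientAt f g (lineMap a b t)) :
    HasDerivAt (f ∘ lineMap a b) ⟪g, b - a⟫ t := by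
  simpa using h.hasFDerivAt.comp_hasDerivAt t hasDerivAt_lineMap

theorem ConvexOn.add_inner_gradient_le {s : Set E} (hf : ConvexOn ℝ s f) (ha : a ∈ s)
    (hb : b ∈ s) (h : HasGradientAt f g a) : f a + ⟪g, b - a⟫ ≤ f b := by
  have hslope := (hf.comp_affineMap (lineMap a b)).le_slope_of_hasDerivAt (x := 0) (y := 1)
    (by simpa) (by simpa) one_pos (HasGradientAt.hasDerivAt_comp_lineMap (t := 0) (by simpa))
  simp only [slope, sub_zero, inv_one, Function.comp_apply, lineMap_apply_one, lineMap_apply_zero,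
    vsub_eq_sub, smul_eq_mul, one_mul] at hslope
  linarith

theorem le_add_inner_add_sq_of_lipschitzOn_gradient {f' : E → E} {L : ℝ} {Q : Set E}
    (hQ : Convex ℝ Q) (hf : ∀ x, HasGradientAt f (f' x) x)
    (hL : ∀ x ∈ Q, ∀ y ∈ Q, ‖f' x - f' y‖ ≤ L * ‖x - y‖) (ha : a ∈ Q) (hb : b ∈ Q) :
    f b ≤ f a + ⟪f' a, b - a⟫ + L / 2 * ‖b - a‖ ^ 2 := by
  set B : ℝ → ℝ := fun t => f a + t * ⟪f' a, b - a⟫ + L / 2 * t ^ 2 * ‖b - a‖ ^ 2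
  have hφ (t : ℝ) : HasDerivAt (f ∘ lineMap a b) ⟪f' (lineMap a b t), b - a⟫ t :=
    (hf _).hasDerivAt_comp_lineMap
  have hB (t : ℝ) : HasDerivAt B (⟪f' a, b - a⟫ + L * t * ‖b - a‖ ^ 2) t := by
    have h := (((hasDerivAt_id t).mul_const ⟪f' a, b - a⟫).const_add (f a)).add
      (((hasDerivAt_pow 2 t).const_mul (L / 2)).mul_const (‖b - a‖ ^ 2))
    exact h.congr_deriv (by push_cast; ring)
  have hbound : ∀ t ∈ Ico (0 : ℝ) 1,
      ⟪f' (lineMap a b t), b - a⟫ ≤ ⟪f' a, b - a⟫ + L * t * ‖b - a‖ ^ 2 := by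
    rintro t ⟨ht0, ht1⟩
    have hmem : lineMap a b t ∈ Q := hQ.lineMap_mem ha hb ⟨ht0, ht1.le⟩
    calc ⟪f' (lineMap a b t), b - a⟫
        = ⟪f' a, b - a⟫ + ⟪f' (lineMap a b t) - f' a, b - a⟫ := by rw [inner_sub_left]; ring
      _ ≤ ⟪f' a, b - a⟫ + ‖f' (lineMap a b t) - f' a‖ * ‖b - a‖ := by
        gcongr; exact real_inner_le_norm _ _
      _ ≤ ⟪f' a, b - a⟫ + L * ‖lineMap a b t - a‖ * ‖b - a‖ := by
        gcongr; exact hL _ hmem _ ha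
      _ = ⟪f' a, b - a⟫ + L * t * ‖b - a‖ ^ 2 := by
        rw [show lineMap a b t - a = t • (b - a) from lineMap_vsub_left a b t, norm_smul,
          Real.norm_of_nonneg ht0]
        ring
  have := image_le_of_deriv_right_le_deriv_boundary
    (fun t _ => (hφ t).continuousAt.continuousWithinAt) (fun t _ => (hφ t).hasDerivWithinAt)
    (by simp [B]) (fun t _ => (hB t).continuousAt.continuousWithinAt)
    (fun t _ => (hB t).hasDerivWithinAt) hbound (right_mem_Icc.2 zero_le_one)
  simpa [B] using this

end Calculus

section Prox

variable {E : Type*} [NormedAddCommGroup E] [InnerProductSpace ℝ E]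

noncomputable def proxObjective (α : ℝ) (g z u v : E) : ℝ := α * ⟪g, v - z⟫ + 1 / 2 * ‖v - u‖ ^ 2

variable {Q : Set E} {α : ℝ} {g z u x v : E}

theorem proxObjective_eq_add (α : ℝ) (g z u x v : E) :
    proxObjective α g z u v =
      proxObjective α g z u x + (α * ⟪g, v - x⟫ + ⟪x - u, v - x⟫) + 1 / 2 * ‖v - x‖ ^ 2 := by
  have hvz : v - z = (x - z) + (v - x) := by abel
  have hvu : v - u = (x - u) + (v - x) := by abel
  simp only [proxObjective]
  rw [hvz, hvu, inner_add_right, norm_add_sq_real]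
  ring

theorem hasFDerivAt_proxObjective :
    HasFDerivAt (proxObjective α g z u) (α • innerSL ℝ g + innerSL ℝ (x - u)) x := by
  have h := (((innerSL ℝ g).hasFDerivAt.comp x ((hasFDerivAt_id x).sub_const z)).const_mul α).add
    (((hasFDerivAt_id x).sub_const u).norm_sq.const_mul (1 / 2 : ℝ))
  refine h.congr_fderiv ?_
  ext w
  simp only [add_apply, smul_apply, ContinuousLinearMap.coe_comp, Function.comp_apply,
    innerSL_apply_apply, ContinuousLinearMap.coe_id', id_eq, smul_eq_mul, nsmul_eq_mul]
  ring

theorem IsMinOn.proxObjective_add_half_sq_le (hQ : Convex ℝ Q)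
    (h : IsMinOn (proxObjective α g z u) Q x) (hx : x ∈ Q) (hv : v ∈ Q) :
    proxObjective α g z u x + 1 / 2 * ‖v - x‖ ^ 2 ≤ proxObjective α g z u v := by
  have hvi := h.localize.hasFDerivWithinAt_nonneg hasFDerivAt_proxObjective.hasFDerivWithinAt
    (sub_mem_posTangentConeAt_of_segment_subset (hQ.segment_subset hx hv))
  simp only [add_apply, smul_apply, innerSL_apply_apply, smul_eq_mul] at hvi
  linarith [proxObjective_eq_add α g z u x v]

end Prox

noncomputable def fgmStepSize (L A : ℝ) : ℝ := (1 + √(1 + 4 * L * A)) / (2 * L)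

section StepSize

variable {L A : ℝ}

theorem fgmStepSize_pos (hL : 0 < L) : 0 < fgmStepSize L A := by
  unfold fgmStepSize
  positivity

theorem mul_fgmStepSize_sq (hL : 0 < L) (hA : 0 ≤ 1 + 4 * L * A) :
    L * fgmStepSize L A ^ 2 = A + fgmStepSize L A := by
  have hs := Real.sq_sqrt hA
  unfold fgmStepSize
  generalize √(1 + 4 * L * A) = s at hs ⊢
  field_simp
  linear_combination hs

theorem add_one_sq_le_one_add_mul_add_fgmStepSize (hL : 0 < L) {m : ℝ}
    (h : m ^ 2 ≤ 1 + 4 * L * A) : (m + 1) ^ 2 ≤ 1 + 4 * L * (A + fgmStepSize L A) := by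
  have hs := Real.sq_sqrt ((sq_nonneg m).trans h)
  have hms : m ≤ √(1 + 4 * L * A) := Real.le_sqrt_of_sq_le h
  have hstep : 4 * L * fgmStepSize L A = 2 * (1 + √(1 + 4 * L * A)) := by
    unfold fgmStepSize
    field_simp
    ring
  nlinarith

theorem sq_le_one_add_mul_of_fgmStepSize (hL : 0 < L) {N : ℕ} {α A : ℕ → ℝ} (hA0 : A 0 = 0)
    (hα : ∀ k < N, α (k + 1) = fgmStepSize L (A k)) (hA : ∀ k < N, A (k + 1) = A k + α (k + 1)) :
    ∀ k ≤ N, ((k : ℝ) + 1) ^ 2 ≤ 1 + 4 * L * A k := by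
  intro k hk
  induction k with
  | zero => simp [hA0]
  | succ k ih =>
    rw [hA k hk, hα k hk]
    push_cast
    exact add_one_sq_le_one_add_mul_add_fgmStepSize hL (ih (by omega))

end StepSize

section FastGradient

variable {E : Type*} [NormedAddCommGroup E] [InnerProductSpace ℝ E] [CompleteSpace E]
  {f : E → ℝ} {f' : E → E} {Q : Set E} {L : ℝ}

theorem fastGradient_potential_step (hQ : Convex ℝ Q) (hf : ∀ x, HasGradientAt f (f' x) x)
    (hconv : ConvexOn ℝ univ f) (hL : ∀ x ∈ Q, ∀ y ∈ Q, ‖f' x - f' y‖ ≤ L * ‖x - y‖)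
    {A α : ℝ} {y u z u' y' x : E} (hA : 0 ≤ A) (hα : 0 < α) (hLα : L * α ^ 2 = A + α)
    (hz : z = (A + α)⁻¹ • (α • u + A • y)) (hy' : y' = (A + α)⁻¹ • (α • u' + A • y))
    (hzQ : z ∈ Q) (hy'Q : y' ∈ Q) (hu'Q : u' ∈ Q)
    (hu' : IsMinOn (proxObjective α (f' z) z u) Q u') (hx : x ∈ Q) :
    (A + α) * (f y' - f x) + 1 / 2 * ‖x - u'‖ ^ 2 ≤ A * (f y - f x) + 1 / 2 * ‖x - u‖ ^ 2 := by
  have hA' : A + α ≠ 0 := by positivity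
  have hyz : y' - z = (α / (A + α)) • (u' - u) := by
    rw [hy', hz, ← smul_sub, div_eq_inv_mul, mul_smul]
    congr 1
    module
  have hzu : α • (z - u) = A • (y - z) := by
    have hz' : (A + α) • z = α • u + A • y := by rw [hz, smul_inv_smul₀ hA']
    rw [smul_sub, smul_sub, sub_eq_sub_iff_add_eq_add, ← add_smul, add_comm α A, hz']
    abel
  have hdescent : (A + α) * f y' ≤ (A + α) * f z + α * ⟪f' z, u' - u⟫ + 1 / 2 * ‖u' - u‖ ^ 2 :=
    calc (A + α) * f y' ≤ (A + α) * (f z + ⟪f' z, y' - z⟫ + L / 2 * ‖y' - z‖ ^ 2) := by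
          gcongr
          exact le_add_inner_add_sq_of_lipschitzOn_gradient hQ hf hL hzQ hy'Q
      _ = (A + α) * f z + α * ⟪f' z, u' - u⟫ + 1 / 2 * ‖u' - u‖ ^ 2 := by
          rw [hyz, real_inner_smul_right, norm_smul, mul_pow, Real.norm_eq_abs, sq_abs]
          field_simp
          linear_combination ‖u' - u‖ ^ 2 * hLα
  have hsplit : α * ⟪f' z, u' - u⟫ = α * ⟪f' z, u' - z⟫ + A * ⟪f' z, y - z⟫ := by
    rw [← real_inner_smul_right, ← real_inner_smul_right, ← real_inner_smul_right, ← hzu,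
      ← inner_add_right, ← smul_add, sub_add_sub_cancel]
  have hthree := hu'.proxObjective_add_half_sq_le hQ hu'Q hx
  have hcy := hconv.add_inner_gradient_le (mem_univ z) (mem_univ y) (hf z)
  have hcx := hconv.add_inner_gradient_le (mem_univ z) (mem_univ x) (hf z)
  simp only [proxObjective] at hthree
  linarith [mul_le_mul_of_nonneg_left hcy hA, mul_le_mul_of_nonneg_left hcx hα.le]

theorem fastGradient_potential_le (hQ : Convex ℝ Q) (hf : ∀ x, HasGradientAt f (f' x) x)
    (hconv : ConvexOn ℝ univ f) (hLpos : 0 < L)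
    (hL : ∀ x ∈ Q, ∀ y ∈ Q, ‖f' x - f' y‖ ≤ L * ‖x - y‖) {N : ℕ} {y z u : ℕ → E} {α A : ℕ → ℝ}
    (hyQ : ∀ k ≤ N, y k ∈ Q) (hzQ : ∀ k ≤ N, z k ∈ Q) (hA0 : A 0 = 0)
    (hα : ∀ k < N, α (k + 1) = fgmStepSize L (A k)) (hA : ∀ k < N, A (k + 1) = A k + α (k + 1))
    (hz : ∀ k < N, z (k + 1) = (A (k + 1))⁻¹ • (α (k + 1) • u k + A k • y k))
    (hu : ∀ k < N, u (k + 1) ∈ Q ∧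
      IsMinOn (proxObjective (α (k + 1)) (f' (z (k + 1))) (z (k + 1)) (u k)) Q (u (k + 1)))
    (hy : ∀ k < N, y (k + 1) = (A (k + 1))⁻¹ • (α (k + 1) • u (k + 1) + A k • y k))
    {x : E} (hx : x ∈ Q) :
    ∀ k ≤ N, A k * (f (y k) - f x) + 1 / 2 * ‖x - u k‖ ^ 2 ≤ 1 / 2 * ‖x - u 0‖ ^ 2 := by
  have hgrowth := sq_le_one_add_mul_of_fgmStepSize hLpos hA0 hα hA
  intro k hk
  induction k with
  | zero => rw [hA0, zero_mul, zero_add]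
  | succ k ih =>
    have hk' : k < N := hk
    have hαpos : 0 < α (k + 1) := (hα k hk').symm ▸ fgmStepSize_pos hLpos
    have hAk : 0 ≤ A k := by nlinarith [hgrowth k hk'.le, k.cast_nonneg (α := ℝ)]
    have hLα : L * α (k + 1) ^ 2 = A k + α (k + 1) := by
      rw [hα k hk']
      exact mul_fgmStepSize_sq hLpos ((sq_nonneg _).trans (hgrowth k hk'.le))
    have hzk := hz k hk'
    have hyk := hy k hk'
    rw [hA k hk'] at hzk hyk ⊢
    exact (fastGradient_potential_step hQ hf hconv hL hAk hαpos hLα hzk hyk (hzQ _ hk) (hyQ _ hk)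
      (hu k hk').1 (hu k hk').2 hx).trans (ih hk'.le)

end FastGradient

theorem min_min_statement_7_general {n : ℕ} (Q : Set (EuclideanSpace ℝ (Fin n)))
    (hQconv : Convex ℝ Q)
    (f : EuclideanSpace ℝ (Fin n) → ℝ)
    (f' : EuclideanSpace ℝ (Fin n) → EuclideanSpace ℝ (Fin n))
    (hdiff : ∀ y, HasGradientAt f (f' y) y)
    (hconv : ConvexOn ℝ Set.univ f)
    (L : ℝ) (hL : 0 < L)
    (hsmooth : ∀ y ∈ Q, ∀ z ∈ Q, ‖f' y - f' z‖ ≤ L * ‖y - z‖)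
    (ystar : EuclideanSpace ℝ (Fin n)) (hystar : ystar ∈ Q)
    (hmin : ∀ y ∈ Q, f ystar ≤ f y)
    (N : ℕ) (hN : 1 ≤ N)
    (y z u : ℕ → EuclideanSpace ℝ (Fin n)) (α A : ℕ → ℝ)
    (hyQ : ∀ k ≤ N, y k ∈ Q) (hzQ : ∀ k ≤ N, z k ∈ Q)
    (hu0 : u 0 = y 0) (hA0 : A 0 = 0)
    (hα : ∀ k < N, α (k + 1) = (1 + Real.sqrt (1 + 4 * L * A k)) / (2 * L))
    (hA : ∀ k < N, A (k + 1) = A k + α (k + 1))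
    (hz : ∀ k < N, z (k + 1) = (A (k + 1))⁻¹ • (α (k + 1) • u k + A k • y k))
    (hu : ∀ k < N, u (k + 1) ∈ Q ∧ ∀ v ∈ Q,
      α (k + 1) * ⟪f' (z (k + 1)), u (k + 1) - z (k + 1)⟫ + 1 / 2 * ‖u (k + 1) - u k‖ ^ 2 ≤
        α (k + 1) * ⟪f' (z (k + 1)), v - z (k + 1)⟫ + 1 / 2 * ‖v - u k‖ ^ 2)
    (hy : ∀ k < N, y (k + 1) = (A (k + 1))⁻¹ • (α (k + 1) • u (k + 1) + A k • y k))
    (R : ℝ) (hR : R ^ 2 = 1 / 2 * ‖y 0 - ystar‖ ^ 2) :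
    f (y N) - f ystar ≤ 8 * L * R ^ 2 / ((N : ℝ) + 1) ^ 2 := by
  have hgrowth := sq_le_one_add_mul_of_fgmStepSize hL hA0 hα hA N le_rfl
  have hpot := fastGradient_potential_le hQconv hdiff hconv hL hsmooth hyQ hzQ hA0 hα hA hz
    (fun k hk => ⟨(hu k hk).1, isMinOn_iff.2 (hu k hk).2⟩) hy hystar N le_rfl
  rw [hu0, norm_sub_rev ystar (y 0), ← hR] at hpot
  have hgap : 0 ≤ f (y N) - f ystar := sub_nonneg.2 (hmin _ (hyQ N le_rfl))
  have hAN : ((N : ℝ) + 1) ^ 2 ≤ 8 * L * A N := by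
    have hN' : (1 : ℝ) ≤ N := by exact_mod_cast hN
    nlinarith
  rw [le_div_iff₀ (by positivity)]
  calc (f (y N) - f ystar) * ((N : ℝ) + 1) ^ 2
      ≤ (f (y N) - f ystar) * (8 * L * A N) := by gcongr
    _ = 8 * L * (A N * (f (y N) - f ystar)) := by ring
    _ ≤ 8 * L * R ^ 2 := by
      gcongr
      linarith [sq_nonneg ‖ystar - u N‖]

/-- convergence rate of the fast gradient method (Algorithm 1):
`f(y^N) − f(y*) ≤ 8·L·R²/(N+1)²` with `R² = (1/2)·‖y⁰ − y*‖²`. -/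
theorem min_min_statement_7 {n : ℕ} (Q : Set (EuclideanSpace ℝ (Fin n)))
    (hQne : Q.Nonempty) (hQcomp : IsCompact Q) (hQconv : Convex ℝ Q)
    (f : EuclideanSpace ℝ (Fin n) → ℝ)
    (f' : EuclideanSpace ℝ (Fin n) → EuclideanSpace ℝ (Fin n))
    (hdiff : ∀ y, HasGradientAt f (f' y) y)
    (hconv : ConvexOn ℝ Set.univ f)
    (L : ℝ) (hL : 0 < L)
    (hsmooth : ∀ y ∈ Q, ∀ z ∈ Q, ‖f' y - f' z‖ ≤ L * ‖y - z‖)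
    (ystar : EuclideanSpace ℝ (Fin n)) (hystar : ystar ∈ Q)
    (hmin : ∀ y ∈ Q, f ystar ≤ f y)
    (N : ℕ) (hN : 1 ≤ N)
    (y z u : ℕ → EuclideanSpace ℝ (Fin n)) (α A : ℕ → ℝ)
    (hyQ : ∀ k ≤ N, y k ∈ Q) (hzQ : ∀ k ≤ N, z k ∈ Q) (huQ : ∀ k ≤ N, u k ∈ Q)
    (hz0 : z 0 = y 0) (hu0 : u 0 = y 0) (hα0 : α 0 = 0) (hA0 : A 0 = 0)
    (hα : ∀ k < N, α (k + 1) = (1 + Real.sqrt (1 + 4 * L * A k)) / (2 * L))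
    (hA : ∀ k < N, A (k + 1) = A k + α (k + 1))
    (hz : ∀ k < N, z (k + 1) = (A (k + 1))⁻¹ • (α (k + 1) • u k + A k • y k))
    (hu : ∀ k < N, u (k + 1) ∈ Q ∧ ∀ v ∈ Q,
      α (k + 1) * ⟪f' (z (k + 1)), u (k + 1) - z (k + 1)⟫ + 1 / 2 * ‖u (k + 1) - u k‖ ^ 2 ≤
        α (k + 1) * ⟪f' (z (k + 1)), v - z (k + 1)⟫ + 1 / 2 * ‖v - u k‖ ^ 2)
    (hy : ∀ k < N, y (k + 1) = (A (k + 1))⁻¹ • (α (k + 1) • u (k + 1) + A k • y k))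
    (R : ℝ) (hR : R ^ 2 = 1 / 2 * ‖y 0 - ystar‖ ^ 2) :
    f (y N) - f ystar ≤ 8 * L * R ^ 2 / ((N : ℝ) + 1) ^ 2 :=
  min_min_statement_7_general Q hQconv f f' hdiff hconv L hL hsmooth ystar hystar hmin N hN y z u α
    A hyQ hzQ hu0 hA0 hα hA hz hu hy R hR
end

section
/- Let Q_x ⊂ ℝ^d and Q_y ⊂ ℝⁿ be nonempty compact convex sets and let F : Q_x × Q_y → ℝ be continuous and μ-strongly convex jointly in (x, y) for some μ > 0, i.e. F(λ(x,y) + (1−λ)(x',y')) ≤ λF(x,y) + (1−λ)F(x',y') − (μ/2)·λ(1−λ)·‖(x,y) − (x',y')‖₂² for all (x,y), (x',y') ∈ Q_x × Q_y and λ ∈ [0,1]. Then the function g : Q_y → ℝ defined by g(y) = min_{x ∈ Q_x} F(x, y) is μ-strongly convex on Q_y. -/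
/-- if `F` is continuous and jointly `μ`-strongly convex on `Q_x × Q_y`
(with the Euclidean product norm), then `g(y) = min_{x ∈ Q_x} F(x, y)` is `μ`-strongly
convex on `Q_y`. -/
theorem min_min_statement_11 {d n : ℕ}
    (Qx : Set (EuclideanSpace ℝ (Fin d))) (Qy : Set (EuclideanSpace ℝ (Fin n)))
    (hQxne : Qx.Nonempty) (hQxc : IsCompact Qx) (hQxconv : Convex ℝ Qx)
    (hQyne : Qy.Nonempty) (hQyc : IsCompact Qy) (hQyconv : Convex ℝ Qy)
    (F : EuclideanSpace ℝ (Fin d) → EuclideanSpace ℝ (Fin n) → ℝ)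
    (μ : ℝ) (hμ : 0 < μ)
    (hFcont : ContinuousOn
      (fun p : EuclideanSpace ℝ (Fin d) × EuclideanSpace ℝ (Fin n) => F p.1 p.2) (Qx ×ˢ Qy))
    (hFsc : ∀ x ∈ Qx, ∀ x' ∈ Qx, ∀ y ∈ Qy, ∀ y' ∈ Qy, ∀ lam : ℝ, 0 ≤ lam → lam ≤ 1 →
      F (lam • x + (1 - lam) • x') (lam • y + (1 - lam) • y') ≤
        lam * F x y + (1 - lam) * F x' y' -
          μ / 2 * lam * (1 - lam) * (‖x - x'‖ ^ 2 + ‖y - y'‖ ^ 2))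
    (g : EuclideanSpace ℝ (Fin n) → ℝ)
    (hg : ∀ y ∈ Qy, IsLeast ((fun x => F x y) '' Qx) (g y)) :
    ∀ y ∈ Qy, ∀ z ∈ Qy, ∀ lam : ℝ, 0 ≤ lam → lam ≤ 1 →
      g (lam • y + (1 - lam) • z) ≤
        lam * g y + (1 - lam) * g z - μ / 2 * lam * (1 - lam) * ‖y - z‖ ^ 2 := by
  intro y hy z hz lam h0 h1
  obtain ⟨⟨x, hx, hFx⟩, -⟩ := hg y hy
  obtain ⟨⟨x', hx', hFx'⟩, -⟩ := hg z hz
  have hw : lam • y + (1 - lam) • z ∈ Qy := hQyconv hy hz h0 (by linarith) (by ring)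
  obtain ⟨-, hlb⟩ := hg _ hw
  have hxw : lam • x + (1 - lam) • x' ∈ Qx := hQxconv hx hx' h0 (by linarith) (by ring)
  have h1' : g (lam • y + (1 - lam) • z) ≤ F (lam • x + (1 - lam) • x') (lam • y + (1 - lam) • z) :=
    hlb ⟨_, hxw, rfl⟩
  have h2 := hFsc x hx x' hx' y hy z hz lam h0 h1
  have hn : 0 ≤ ‖x - x'‖ ^ 2 := by positivity
  have hc : 0 ≤ μ / 2 * lam * (1 - lam) := by
    have : 0 ≤ μ / 2 := by linarith
    have : 0 ≤ 1 - lam := by linarith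
    positivity
  nlinarith [mul_nonneg hc hn]
end

section
/- Let A ∈ ℝ^{m×d} with rows a₁ᵀ, …, a_mᵀ and b ∈ ℝ^m be such that the polytope P = {x ∈ ℝ^d : A x ≥ b} is bounded and has nonempty interior, and for x in the interior of P let H(x) = Σ_{i=1}^m a_i a_iᵀ/(a_iᵀx − b_i)² and σ_i(x) = a_iᵀ H(x)^{−1} a_i/(a_iᵀx − b_i)². Then the volumetric barrier V(x) = (1/2)·log(det H(x)) is differentiable on the interior of P and its gradient equals ∇V(x) = −Σ_{i=1}^m σ_i(x)·a_i/(a_iᵀx − b_i). -/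
/-!
Jacobi's formula says that `det` has derivative `E ↦ tr (adj M · E)` at `M`; it follows from
the multilinearity of `det` in the rows together with Cramer's rule. Hence
`d log det H = tr (H⁻¹ dH)` wherever `det H ≠ 0`, and for the rank-one terms of `H` one has
`tr (H⁻¹ aᵢaᵢᵀ) = aᵢᵀH⁻¹aᵢ`; differentiating the weights `(aᵢᵀx − bᵢ)⁻²` produces the
gradient. Invertibility comes from boundedness of `P`: a vector orthogonal to every `aᵢ` gives
a line inside `P`, so the `aᵢ` span and `H` is positive definite.
-/

open Matrix
open scoped Matrix.Norms.Elementwise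

namespace Matrix

variable {n : Type*} [Fintype n] [DecidableEq n]

theorem sum_det_updateRow_eq_trace_adjugate_mul {R : Type*} [CommRing R] (M E : Matrix n n R) :
    ∑ j, (M.updateRow j (E j)).det = trace (adjugate M * E) := by
  simp only [← cramer_transpose_apply, cramer_eq_adjugate_mulVec, ← adjugate_transpose, trace,
    diag_apply, mul_apply, mulVec, dotProduct, transpose_apply]
  exact Finset.sum_comm

variable {𝕜 : Type*} [NontriviallyNormedField 𝕜]

noncomputable def detContinuousMultilinearMap :
    ContinuousMultilinearMap 𝕜 (fun _ : n => n → 𝕜) 𝕜 :=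
  { (detRowAlternating : (n → 𝕜) [⋀^n]→ₗ[𝕜] 𝕜).toMultilinearMap with
    cont := continuous_id.matrix_det }

theorem hasFDerivAt_det (M : Matrix n n 𝕜) :
    ∃ L : Matrix n n 𝕜 →L[𝕜] 𝕜, (∀ E, L E = trace (adjugate M * E)) ∧ HasFDerivAt det L M :=
  ⟨detContinuousMultilinearMap.linearDeriv M, fun E =>
    (ContinuousMultilinearMap.linearDeriv_apply _ _ _).trans
      (sum_det_updateRow_eq_trace_adjugate_mul M E),
    detContinuousMultilinearMap.hasFDerivAt M⟩

end Matrix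

theorem HasFDerivAt.log_det {n E : Type*} [Fintype n] [DecidableEq n] [NormedAddCommGroup E]
    [NormedSpace ℝ E] {f : E → Matrix n n ℝ} {f' : E →L[ℝ] Matrix n n ℝ} {x : E}
    (hf : HasFDerivAt f f' x) (hx : (f x).det ≠ 0) :
    ∃ L : E →L[ℝ] ℝ, (∀ v, L v = trace ((f x)⁻¹ * f' v)) ∧
      HasFDerivAt (fun y => Real.log (f y).det) L x := by
  obtain ⟨D, hD, hdet⟩ := hasFDerivAt_det (f x)
  refine ⟨(f x).det⁻¹ • D.comp f', fun v => ?_,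
    (Real.hasDerivAt_log hx).comp_hasFDerivAt (f := fun y => (f y).det) x (hdet.comp x hf)⟩
  rw [_root_.smul_apply, ContinuousLinearMap.comp_apply, hD, inv_def, Ring.inverse_eq_inv',
    smul_mul_assoc, trace_smul, smul_eq_mul]

theorem hasFDerivAt_dotProduct {n : Type*} [Fintype n] (a x : n → ℝ) :
    HasFDerivAt (a ⬝ᵥ ·) (LinearMap.toContinuousLinearMap (dotProductBilin ℝ ℝ a)) x :=
  (LinearMap.toContinuousLinearMap (dotProductBilin ℝ ℝ a)).hasFDerivAt

section RankOne

variable {ι n : Type*} [Fintype n]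

theorem Matrix.dotProduct_sum_smul_vecMulVec_mulVec [Fintype ι] (w : ι → ℝ) (a : ι → n → ℝ)
    (v : n → ℝ) :
    v ⬝ᵥ ((∑ i, w i • vecMulVec (a i) (a i)) *ᵥ v) = ∑ i, w i * (a i ⬝ᵥ v) ^ 2 := by
  simp only [sum_mulVec, dotProduct_sum, smul_mulVec, vecMulVec_mulVec, op_smul_eq_smul,
    dotProduct_smul, smul_eq_mul]
  exact Finset.sum_congr rfl fun i _ => by rw [dotProduct_comm v]; ring

theorem Matrix.posDef_sum_smul_vecMulVec_self [Fintype ι] [DecidableEq n] {w : ι → ℝ}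
    (hw : ∀ i, 0 < w i) {a : ι → n → ℝ} (hspan : ∀ v, (∀ i, a i ⬝ᵥ v = 0) → v = 0) :
    (∑ i, w i • vecMulVec (a i) (a i)).PosDef := by
  have hsemi : (∑ i, w i • vecMulVec (a i) (a i)).PosSemidef :=
    posSemidef_sum _ fun i _ => (posSemidef_vecMulVec_self_star (a i)).smul (hw i).le
  refine posDef_iff_dotProduct_mulVec.2 ⟨hsemi.isHermitian, fun v hv => ?_⟩
  obtain ⟨i, hi⟩ : ∃ i, a i ⬝ᵥ v ≠ 0 := by
    by_contra! h
    exact hv (hspan v h)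
  rw [star_trivial, dotProduct_sum_smul_vecMulVec_mulVec]
  exact Finset.sum_pos' (fun j _ => mul_nonneg (hw j).le (sq_nonneg _))
    ⟨i, Finset.mem_univ i, mul_pos (hw i) (by positivity)⟩

end RankOne

theorem eq_zero_of_forall_dotProduct_eq_zero_of_isBounded {ι n : Type*} [Fintype n]
    {a : ι → n → ℝ} {b : ι → ℝ} (hbdd : Bornology.IsBounded {x | ∀ i, b i ≤ a i ⬝ᵥ x})
    {y : n → ℝ} (hy : ∀ i, b i ≤ a i ⬝ᵥ y) {v : n → ℝ} (hv : ∀ i, a i ⬝ᵥ v = 0) : v = 0 := by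
  obtain ⟨C, hC⟩ := isBounded_iff_forall_norm_le.1 hbdd
  have hline : ∀ t : ℝ, |t| * ‖v‖ ≤ 2 * C := fun t => by
    have hyt : ‖y + t • v‖ ≤ C := hC _ fun i => by simpa [dotProduct_add, hv i] using hy i
    have hy : ‖y‖ ≤ C := hC _ hy
    calc |t| * ‖v‖ = ‖(y + t • v) - y‖ := by simp [norm_smul]
      _ ≤ ‖y + t • v‖ + ‖y‖ := norm_sub_le _ _
      _ ≤ 2 * C := by linarith
  by_contra hv0
  have hpos : 0 < ‖v‖ := norm_pos_iff.2 hv0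
  have := (mul_le_mul_of_nonneg_right (le_abs_self ((2 * C + 1) / ‖v‖)) hpos.le).trans
    (hline ((2 * C + 1) / ‖v‖))
  rw [div_mul_cancel₀ _ hpos.ne'] at this
  linarith

section Barrier

variable {ι n : Type*} [Fintype ι] [Fintype n] (a : ι → n → ℝ) (b : ι → ℝ)

noncomputable def barrierHessian (x : n → ℝ) : Matrix n n ℝ :=
  ∑ i, ((a i ⬝ᵥ x - b i) ^ 2)⁻¹ • vecMulVec (a i) (a i)

noncomputable def leverageScore [DecidableEq n] (i : ι) (x : n → ℝ) : ℝ :=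
  a i ⬝ᵥ ((barrierHessian a b x)⁻¹ *ᵥ a i) / (a i ⬝ᵥ x - b i) ^ 2

noncomputable def volumetricBarrier [DecidableEq n] (x : n → ℝ) : ℝ :=
  1 / 2 * Real.log (barrierHessian a b x).det

variable {a b}

theorem barrierHessian_posDef [DecidableEq n] (hspan : ∀ v, (∀ i, a i ⬝ᵥ v = 0) → v = 0)
    {x : n → ℝ} (hx : ∀ i, a i ⬝ᵥ x ≠ b i) : (barrierHessian a b x).PosDef :=
  posDef_sum_smul_vecMulVec_self (fun i => by have := sub_ne_zero.2 (hx i); positivity) hspan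

theorem hasFDerivAt_barrierHessian {x : n → ℝ} (hx : ∀ i, a i ⬝ᵥ x ≠ b i) :
    HasFDerivAt (barrierHessian a b)
      (∑ i, ((-2 / (a i ⬝ᵥ x - b i) ^ 3) •
        LinearMap.toContinuousLinearMap (dotProductBilin ℝ ℝ (a i))).smulRight
          (vecMulVec (a i) (a i))) x := by
  refine HasFDerivAt.fun_sum fun i _ => HasFDerivAt.smul_const ?_ _
  have hs : a i ⬝ᵥ x - b i ≠ 0 := sub_ne_zero.2 (hx i)
  have hinv : HasDerivAt (fun t : ℝ => (t ^ 2)⁻¹) (-2 / (a i ⬝ᵥ x - b i) ^ 3) (a i ⬝ᵥ x - b i) :=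
    ((hasDerivAt_pow 2 _).fun_inv (c := fun t => t ^ 2) (pow_ne_zero 2 hs)).congr_deriv
      (by field_simp; ring)
  exact hinv.comp_hasFDerivAt (f := fun y => a i ⬝ᵥ y - b i) x
    ((hasFDerivAt_dotProduct (a i) x).sub_const (b i))

theorem hasFDerivAt_volumetricBarrier [DecidableEq n]
    (hspan : ∀ v, (∀ i, a i ⬝ᵥ v = 0) → v = 0) {x : n → ℝ} (hx : ∀ i, a i ⬝ᵥ x ≠ b i) :
    ∃ G : (n → ℝ) →L[ℝ] ℝ,
      (∀ v, G v = (-∑ i, (leverageScore a b i x / (a i ⬝ᵥ x - b i)) • a i) ⬝ᵥ v) ∧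
        HasFDerivAt (volumetricBarrier a b) G x := by
  obtain ⟨L, hL, hlog⟩ :=
    (hasFDerivAt_barrierHessian hx).log_det (barrierHessian_posDef hspan hx).det_pos.ne'
  refine ⟨(1 / 2 : ℝ) • L, fun v => ?_, hlog.const_mul (1 / 2)⟩
  simp only [_root_.smul_apply, hL, _root_.sum_apply, ContinuousLinearMap.smulRight_apply,
    LinearMap.coe_toContinuousLinearMap', dotProductBilin_apply_apply, smul_eq_mul, trace_sum,
    mul_smul_comm, trace_smul, mul_vecMulVec, trace_vecMulVec, neg_dotProduct, sum_dotProduct,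
    smul_dotProduct, leverageScore, Finset.mul_sum, ← Finset.sum_neg_distrib]
  refine Finset.sum_congr rfl fun i _ => ?_
  have hs : a i ⬝ᵥ x - b i ≠ 0 := sub_ne_zero.2 (hx i)
  rw [dotProduct_comm ((barrierHessian a b x)⁻¹ *ᵥ a i)]
  field_simp

end Barrier

theorem min_min_statement_16_general {m d : ℕ} (a : Fin m → Fin d → ℝ) (b : Fin m → ℝ)
    (P : Set (Fin d → ℝ)) (hP : P = {x | ∀ i, b i ≤ a i ⬝ᵥ x})
    (hbdd : Bornology.IsBounded P)
    (H : (Fin d → ℝ) → Matrix (Fin d) (Fin d) ℝ)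
    (hH : ∀ x, H x = ∑ i, ((a i ⬝ᵥ x - b i) ^ 2)⁻¹ • vecMulVec (a i) (a i))
    (σ : Fin m → (Fin d → ℝ) → ℝ)
    (hσ : ∀ i x, σ i x = (a i ⬝ᵥ ((H x)⁻¹ *ᵥ a i)) / (a i ⬝ᵥ x - b i) ^ 2)
    (V : (Fin d → ℝ) → ℝ)
    (hV : ∀ x, V x = 1 / 2 * Real.log (H x).det) :
    ∀ x : Fin d → ℝ, (∀ i, b i < a i ⬝ᵥ x) →
      ∃ G : (Fin d → ℝ) →L[ℝ] ℝ,
        (∀ v, G v = (-∑ i, (σ i x / (a i ⬝ᵥ x - b i)) • a i) ⬝ᵥ v) ∧ HasFDerivAt V G x := by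
  intro x hx
  subst hP
  obtain rfl : H = barrierHessian a b := funext hH
  obtain rfl : σ = leverageScore a b := funext fun i => funext (hσ i)
  obtain rfl : V = volumetricBarrier a b := funext hV
  exact hasFDerivAt_volumetricBarrier
    (fun _ => eq_zero_of_forall_dotProduct_eq_zero_of_isBounded hbdd fun i => (hx i).le)
    fun i => (hx i).ne'

/-- the volumetric barrier `V(x) = (1/2)·log det H(x)` of a bounded polytope
`P = {x : Ax ≥ b}` with nonempty interior is differentiable on the interior and its gradient
is `−Σᵢ σᵢ(x)·aᵢ/(aᵢᵀx − bᵢ)`, where `σᵢ(x) = aᵢᵀH(x)⁻¹aᵢ/(aᵢᵀx − bᵢ)²`. -/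
theorem min_min_statement_16 {m d : ℕ} (a : Fin m → Fin d → ℝ) (b : Fin m → ℝ)
    (P : Set (Fin d → ℝ)) (hP : P = {x | ∀ i, b i ≤ a i ⬝ᵥ x})
    (hbdd : Bornology.IsBounded P) (hint : (interior P).Nonempty)
    (H : (Fin d → ℝ) → Matrix (Fin d) (Fin d) ℝ)
    (hH : ∀ x, H x = ∑ i, ((a i ⬝ᵥ x - b i) ^ 2)⁻¹ • vecMulVec (a i) (a i))
    (σ : Fin m → (Fin d → ℝ) → ℝ)
    (hσ : ∀ i x, σ i x = (a i ⬝ᵥ ((H x)⁻¹ *ᵥ a i)) / (a i ⬝ᵥ x - b i) ^ 2)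
    (V : (Fin d → ℝ) → ℝ)
    (hV : ∀ x, V x = 1 / 2 * Real.log (H x).det) :
    ∀ x : Fin d → ℝ, (∀ i, b i < a i ⬝ᵥ x) →
      ∃ G : (Fin d → ℝ) →L[ℝ] ℝ,
        (∀ v, G v = (-∑ i, (σ i x / (a i ⬝ᵥ x - b i)) • a i) ⬝ᵥ v) ∧ HasFDerivAt V G x :=
  min_min_statement_16_general a b P hP hbdd H hH σ hσ V hV
end
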